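/- For every n ≥ 2, X_n < 2n·X_{n−1}. -/

import Mathlib

/-!
Put `n = m + 4` and reindex the defining sum by `j = i + 2`: then
`X_{m+4} = 2(m+3) X_{m+3} + S` with `S = ∑_{i+j=m} (i+1) X_{i+2} X_{j+2}`, and the claim is
`S < 2 X_{m+3}`. Symmetrizing `i ↔ j` gives `2S = (m+2) Q` with `Q = ∑_{i+j=m} X_{i+2} X_{j+2}`.
The two boundary terms of `Q` are `2 X_{m+2}` each, and the claim for smaller indices gives
`X_{a+3} X_{b+3} ≤ 8 X_{a+b+3}` for the `m - 1` interior ones, so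
`Q ≤ 4 X_{m+2} + 8(m-1) X_{m+1} < 8 X_{m+2}`; the bound `X_{k+1} ≥ 2k X_k` turns this into
`(m+2) Q < 4 X_{m+3}`. The cases `n ≤ 5` are checked by hand.
-/

/-- The sequence `X_n` counting equivalence classes of circular planar electrical networks:
`X_1 = 1` and, for `n ≥ 2`,
`X_n = 2(n-1) X_{n-1} + ∑_{j=2}^{n-2} (j-1) X_j X_{n-j}` (the sum being empty for `n ≤ 3`;
here it is written over the attached index set to establish termination). -/
def X : ℕ → ℕ
  | 0 => 1
  | 1 => 1
  | n + 2 =>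
      2 * (n + 1) * X (n + 1) +
        ∑ j ∈ (Finset.Icc 2 n).attach, (j.1 - 1) * X j.1 * X (n + 2 - j.1)
decreasing_by
  · exact Nat.lt_succ_self (n + 1)
  · have := j.2; rw [Finset.mem_Icc] at this; omega
  · have := j.2; rw [Finset.mem_Icc] at this; omega

open Finset

lemma X_add_four (m : ℕ) : X (m + 4) =
    2 * (m + 3) * X (m + 3) + ∑ p ∈ antidiagonal m, (p.1 + 1) * X (p.1 + 2) * X (p.2 + 2) := by
  rw [X, sum_attach (Icc 2 (m + 2)) fun j ↦ (j - 1) * X j * X (m + 2 + 2 - j),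
    Nat.sum_antidiagonal_eq_sum_range_succ_mk, ← Ico_add_one_right_eq_Icc, sum_Ico_eq_sum_range]
  congr 1
  refine sum_congr (by congr 1) fun i hi ↦ ?_
  rw [mem_range] at hi
  rw [show m + 2 + 2 - (2 + i) = m - i + 2 by omega, show 2 + i - 1 = i + 1 by omega, add_comm 2 i]

lemma two_mul_mul_X_le_X_add_two (n : ℕ) : 2 * (n + 1) * X (n + 1) ≤ X (n + 2) := by
  rw [X]; exact Nat.le_add_right _ _

lemma X_pos (n : ℕ) : 0 < X n := by
  induction n using Nat.strong_induction_on with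
  | _ n ih =>
    match n with
    | 0 | 1 => simp [X]
    | n + 2 =>
      exact (Nat.mul_pos (by positivity) (ih (n + 1) (by omega))).trans_le
        (two_mul_mul_X_le_X_add_two n)

lemma X_one : X 1 = 1 := by rw [X]
lemma X_two : X 2 = 2 := by rw [X]; simp [X_one]
lemma X_three : X 3 = 8 := by rw [X]; simp [X_two]
lemma X_four : X 4 = 52 := by rw [X_add_four]; simp [X_two, X_three]
lemma X_five : X 5 = 464 := by rw [X_add_four]; simp [Nat.sum_antidiagonal_succ, X_two, X_three, X_four]

lemma Finset.Nat.two_mul_sum_antidiagonal_succ_mul_mul {R : Type*} [CommSemiring R] (v : ℕ → R)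
    (n : ℕ) : 2 * ∑ p ∈ antidiagonal n, (p.1 + 1 : R) * v p.1 * v p.2 =
      (n + 2) * ∑ p ∈ antidiagonal n, v p.1 * v p.2 := by
  conv_lhs => rw [two_mul]; enter [2]; rw [← Nat.sum_antidiagonal_swap]
  rw [← sum_add_distrib, mul_sum]
  refine sum_congr rfl fun p hp ↦ ?_
  rw [← HasAntidiagonal.mem_antidiagonal.mp hp, Prod.fst_swap, Prod.snd_swap]
  push_cast; ring

lemma X_add_three_mul_X_add_three_le {a : ℕ} (hX : ∀ j < a, X (j + 4) ≤ 2 * (j + 4) * X (j + 3))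
    (b : ℕ) : X (a + 3) * X (b + 3) ≤ 8 * X (a + b + 3) := by
  induction a generalizing b with
  | zero => simp [X_three]
  | succ a ih =>
    cases b with
    | zero => simp [X_three, mul_comm]
    | succ b =>
      calc X (a + 4) * X (b + 4) ≤ 2 * (a + 4) * (X (a + 3) * X (b + 4)) := by
            rw [← mul_assoc]; exact Nat.mul_le_mul_right _ (hX a a.lt_add_one)
        _ ≤ 2 * (a + b + 4) * (8 * X (a + b + 4)) := by
            gcongr ?_ * ?_
            · omega
            · exact ih (fun j hj ↦ hX j (by omega)) (b + 1)
        _ ≤ 8 * X (a + 1 + (b + 1) + 3) := by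
            rw [mul_left_comm, show a + 1 + (b + 1) + 3 = a + b + 3 + 2 by omega]
            exact Nat.mul_le_mul_left _ (two_mul_mul_X_le_X_add_two (a + b + 3))

lemma sum_antidiagonal_X_mul_X_le {k : ℕ} (hX : ∀ j < k, X (j + 4) ≤ 2 * (j + 4) * X (j + 3)) :
    ∑ p ∈ antidiagonal (k + 2), X (p.1 + 2) * X (p.2 + 2) ≤
      4 * X (k + 4) + 8 * (k + 1) * X (k + 3) := by
  have inner : ∑ p ∈ antidiagonal k, X (p.1 + 3) * X (p.2 + 3) ≤ (k + 1) * (8 * X (k + 3)) := by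
    rw [← Nat.card_antidiagonal k, ← smul_eq_mul]
    refine sum_le_card_nsmul _ _ _ fun p hp ↦ ?_
    have hpk := HasAntidiagonal.mem_antidiagonal.mp hp
    have := X_add_three_mul_X_add_three_le (a := p.1) (fun j hj ↦ hX j (by omega)) p.2
    rwa [hpk] at this
  rw [Nat.sum_antidiagonal_succ, Nat.sum_antidiagonal_succ']
  simp only [X_two, zero_add, add_assoc, Nat.reduceAdd]
  linarith

lemma X_add_six_lt {k : ℕ} (hX : ∀ j < k, X (j + 4) ≤ 2 * (j + 4) * X (j + 3)) :
    X (k + 6) < 2 * (k + 6) * X (k + 5) := by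
  have hsym := Nat.two_mul_sum_antidiagonal_succ_mul_mul (fun i ↦ X (i + 2)) (k + 2)
  simp only [Nat.cast_id] at hsym
  set S := ∑ p ∈ antidiagonal (k + 2), (p.1 + 1) * X (p.1 + 2) * X (p.2 + 2)
  set Q := ∑ p ∈ antidiagonal (k + 2), X (p.1 + 2) * X (p.2 + 2)
  have h4 : 2 * (k + 3) * X (k + 3) ≤ X (k + 4) := two_mul_mul_X_le_X_add_two (k + 2)
  have h5 : 2 * (k + 4) * X (k + 4) ≤ X (k + 5) := two_mul_mul_X_le_X_add_two (k + 3)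
  have hmid : 8 * (k + 1) * X (k + 3) < 4 * X (k + 4) := by
    calc 8 * (k + 1) * X (k + 3) < 8 * (k + 3) * X (k + 3) := by
          gcongr
          · exact X_pos _
          · omega
      _ ≤ 4 * X (k + 4) := by linarith
  have hS : 2 * S < 2 * (2 * X (k + 5)) := by
    calc 2 * S = (k + 4) * Q := hsym
      _ ≤ (k + 4) * (4 * X (k + 4) + 8 * (k + 1) * X (k + 3)) := by
          gcongr; exact sum_antidiagonal_X_mul_X_le hX
      _ < (k + 4) * (8 * X (k + 4)) := by gcongr; linarith
      _ = 4 * (2 * (k + 4) * X (k + 4)) := by ring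
      _ ≤ 2 * (2 * X (k + 5)) := by linarith
  have hrec : X (k + 6) = 2 * (k + 5) * X (k + 5) + S := X_add_four (k + 2)
  linarith

lemma X_add_two_lt (m : ℕ) : X (m + 2) < 2 * (m + 2) * X (m + 1) := by
  induction m using Nat.strong_induction_on with
  | _ m ih =>
    match m with
    | 0 => simp [X_one, X_two]
    | 1 => simp [X_two, X_three]
    | 2 => simp [X_three, X_four]
    | 3 => simp [X_four, X_five]
    | k + 4 => exact X_add_six_lt fun j hj ↦ (ih (j + 2) (by omega)).le

/-- For every `n ≥ 2`, `X_n < 2n·X_{n-1}`. -/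
theorem X_lt_two_mul (n : ℕ) (hn : 2 ≤ n) : X n < 2 * n * X (n - 1) := by
  obtain ⟨m, rfl⟩ := Nat.exists_eq_add_of_le' hn
  simpa using X_add_two_lt m
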